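/- arXiv:1410.3540 — 3 statements merged into one kernel-verified Lean document; each statement's English description precedes it below -/
import Mathlib

section
/- Let F be a finite field with q elements and n ≥ 2. Then the number of monic square-free degree-n polynomials over F with an even number of monic irreducible factors equals the number with an odd number of monic irreducible factors; each count equals (q^n − q^{n−1})/2. -/
/-!
Write `ω(d)` for the number of monic irreducible factors of `d`. For monic `f ≠ 0` and `j ≥ 1`,
the sum of `(-1)^ω(d)` over the monic squarefree `d` with `d^j ∣ f` is `0` as soon as some
irreducible `p` has `p^j ∣ f` (multiplying `d` by `p` or dividing it out is a sign-reversing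
involution), and `1` otherwise. Summing over the `q^n` monic `f` of degree `n`, where `d^j` has
`q^(n - j deg d)` multiples, gives for `μ(k) = ∑ (-1)^ω(d)` over squarefree monic `d` of degree `k`:
* `∑_{k ≤ n} μ(k) q^(n-k) = [n = 0]` (`j = 1`), hence `μ(0) = 1`, `μ(1) = -q` and `μ(k) = 0`
  for `k ≥ 2`;
* `∑_{2k ≤ n} μ(k) q^(n-2k)` is the number of squarefree monic `f` of degree `n` (`j = 2`),
  which is therefore `q^n - q^(n-1)` for `n ≥ 2`.
Now `μ(n)` is the number of such `f` with even `ω` minus the number with odd `ω`.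
-/

open Polynomial

theorem isUnit_iff_forall_irreducible_not_dvd {α : Type*} [CommMonoidWithZero α]
    [WfDvdMonoid α] {a : α} (ha : a ≠ 0) : IsUnit a ↔ ∀ p, Irreducible p → ¬ p ∣ a := by
  refine ⟨fun hu p hp hpa => hp.not_isUnit (isUnit_of_dvd_unit hpa hu), fun h => ?_⟩
  by_contra hu
  obtain ⟨p, hp, hpa⟩ := WfDvdMonoid.exists_irreducible_factor hu ha
  exact h p hp hpa

namespace Polynomial

open Finset
open scoped Classical

variable {F : Type*} [Field F]

noncomputable def cardDistinctFactors (f : F[X]) : ℕ :=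
  Nat.card {g : F[X] // g.Monic ∧ Irreducible g ∧ g ∣ f}

theorem cardDistinctFactors_one : cardDistinctFactors (1 : F[X]) = 0 := by
  have : IsEmpty {g : F[X] // g.Monic ∧ Irreducible g ∧ g ∣ 1} :=
    ⟨fun g => g.2.2.1.not_isUnit (isUnit_of_dvd_one g.2.2.2)⟩
  simp [cardDistinctFactors]

theorem cardDistinctFactors_eq_ncard (f : F[X]) :
    cardDistinctFactors f = {g : F[X] | g.Monic ∧ Irreducible g ∧ g ∣ f}.ncard :=
  Nat.card_coe_set_eq _

theorem finite_setOf_monic_irreducible_dvd {f : F[X]} (hf : f ≠ 0) :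
    {g : F[X] | g.Monic ∧ Irreducible g ∧ g ∣ f}.Finite :=
  (UniqueFactorizationMonoid.normalizedFactors f).finite_toSet.subset fun _ ⟨hm, hi, hg⟩ =>
    (Polynomial.mem_normalizedFactors_iff hf).2 ⟨hi, hm, hg⟩

theorem cardDistinctFactors_mul_of_not_dvd {p e : F[X]} (hp : p.Monic) (hpi : Irreducible p)
    (he : e ≠ 0) (hpe : ¬ p ∣ e) : cardDistinctFactors (p * e) = cardDistinctFactors e + 1 := by
  have hset : {g : F[X] | g.Monic ∧ Irreducible g ∧ g ∣ p * e}
      = insert p {g : F[X] | g.Monic ∧ Irreducible g ∧ g ∣ e} := by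
    ext g
    constructor
    · rintro ⟨hgm, hgi, hg⟩
      rcases hgi.prime.dvd_or_dvd hg with hgp | hge
      · exact .inl (eq_of_monic_of_associated hgm hp (hgi.associated_of_dvd hpi hgp))
      · exact .inr ⟨hgm, hgi, hge⟩
    · rintro (rfl | ⟨hgm, hgi, hge⟩)
      · exact ⟨hp, hpi, dvd_mul_right g e⟩
      · exact ⟨hgm, hgi, hge.mul_left p⟩
  rw [cardDistinctFactors_eq_ncard, cardDistinctFactors_eq_ncard, hset]
  exact Set.ncard_insert_of_notMem (fun h => hpe h.2.2) (finite_setOf_monic_irreducible_dvd he)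

noncomputable def toggleFactor (p d : F[X]) : F[X] := if p ∣ d then d / p else p * d

theorem toggleFactor_of_not_dvd {p d : F[X]} (h : ¬ p ∣ d) : toggleFactor p d = p * d := by
  rw [toggleFactor, if_neg h]

theorem toggleFactor_mul {p e : F[X]} (hp : p ≠ 0) : toggleFactor p (p * e) = e := by
  rw [toggleFactor, if_pos (dvd_mul_right p e), mul_div_cancel_left₀ e hp]

theorem exists_not_dvd_toggleFactor {p d : F[X]} (hp : Irreducible p) (hd : Squarefree d) :
    ∃ e, ¬ p ∣ e ∧ (d = e ∧ toggleFactor p d = p * e ∨ d = p * e ∧ toggleFactor p d = e) := by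
  by_cases hpd : p ∣ d
  · obtain ⟨e, rfl⟩ := hpd
    exact ⟨e, fun hpe => hp.not_isUnit (hd p (mul_dvd_mul_left p hpe)),
      .inr ⟨rfl, toggleFactor_mul hp.ne_zero⟩⟩
  · exact ⟨d, hpd, .inl ⟨rfl, toggleFactor_of_not_dvd hpd⟩⟩

theorem toggleFactor_toggleFactor {p d : F[X]} (hp : Irreducible p) (hd : Squarefree d) :
    toggleFactor p (toggleFactor p d) = d := by
  obtain ⟨e, hpe, ⟨rfl, ht⟩ | ⟨rfl, ht⟩⟩ := exists_not_dvd_toggleFactor hp hd <;> rw [ht]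
  · exact toggleFactor_mul hp.ne_zero
  · exact toggleFactor_of_not_dvd hpe

section FiniteField

variable (F) [Fintype F]

noncomputable def monicsOfDegree (n : ℕ) : Finset F[X] :=
  univ.image fun c : Fin n → F => X ^ n + ((degreeLTEquiv F n).symm c : F[X])

noncomputable def monicsUpTo (n : ℕ) : Finset F[X] :=
  (range (n + 1)).biUnion (monicsOfDegree F)

variable {F}

theorem mem_monicsOfDegree {n : ℕ} {f : F[X]} :
    f ∈ monicsOfDegree F n ↔ f.Monic ∧ f.natDegree = n := by
  simp only [monicsOfDegree, mem_image, mem_univ, true_and]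
  constructor
  · rintro ⟨c, rfl⟩
    have hc : degree ((degreeLTEquiv F n).symm c : F[X]) < degree ((X : F[X]) ^ n) := by
      rw [degree_X_pow]; exact mem_degreeLT.1 ((degreeLTEquiv F n).symm c).2
    exact ⟨monic_X_pow_add (degree_X_pow (R := F) n ▸ hc),
      (natDegree_add_eq_left_of_degree_lt hc).trans (natDegree_X_pow n)⟩
  · rintro ⟨hm, rfl⟩
    have hlt : degree (f - X ^ f.natDegree) < f.natDegree := by
      have hdeg : degree f = degree ((X : F[X]) ^ f.natDegree) := by
        rw [degree_X_pow, degree_eq_natDegree hm.ne_zero]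
      simpa [degree_eq_natDegree hm.ne_zero] using
        degree_sub_lt_left hdeg hm.ne_zero (by rw [hm.leadingCoeff, leadingCoeff_X_pow])
    exact ⟨degreeLTEquiv F _ ⟨_, mem_degreeLT.2 hlt⟩, by simp⟩

theorem card_monicsOfDegree (n : ℕ) : #(monicsOfDegree F n) = Fintype.card F ^ n := by
  rw [monicsOfDegree, card_image_of_injective _ fun c c' h =>
    (degreeLTEquiv F n).symm.injective (Subtype.ext (add_left_cancel h)), card_univ,
    Fintype.card_fun, Fintype.card_fin]

theorem mem_monicsUpTo {n : ℕ} {f : F[X]} : f ∈ monicsUpTo F n ↔ f.Monic ∧ f.natDegree ≤ n := by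
  simp [monicsUpTo, mem_monicsOfDegree, and_comm]

noncomputable def squarefreeDivisors (j : ℕ) (f : F[X]) : Finset F[X] :=
  {d ∈ monicsUpTo F f.natDegree | Squarefree d ∧ d ^ j ∣ f}

theorem mem_squarefreeDivisors {j : ℕ} {f d : F[X]} (hj : j ≠ 0) (hf : f ≠ 0) :
    d ∈ squarefreeDivisors j f ↔ d.Monic ∧ Squarefree d ∧ d ^ j ∣ f := by
  rw [squarefreeDivisors, mem_filter, mem_monicsUpTo]
  exact ⟨fun ⟨⟨hm, _⟩, hsf, hdf⟩ => ⟨hm, hsf, hdf⟩, fun ⟨hm, hsf, hdf⟩ =>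
    ⟨⟨hm, natDegree_le_of_dvd ((dvd_pow_self d hj).trans hdf) hf⟩, hsf, hdf⟩⟩

theorem mul_mem_squarefreeDivisors_iff {j : ℕ} {f p e : F[X]} (hj : j ≠ 0) (hf : f ≠ 0)
    (hp : p.Monic) (hpi : Irreducible p) (hpf : p ^ j ∣ f) (hpe : ¬ p ∣ e) :
    p * e ∈ squarefreeDivisors j f ↔ e ∈ squarefreeDivisors j f := by
  have hrel : IsRelPrime p e := hpi.isRelPrime_iff_not_dvd.2 hpe
  rw [mem_squarefreeDivisors hj hf, mem_squarefreeDivisors hj hf, squarefree_mul_iff, mul_pow]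
  exact ⟨fun ⟨hm, ⟨_, _, hsf⟩, hdf⟩ => ⟨hp.of_mul_monic_left hm, hsf, (dvd_mul_left _ _).trans hdf⟩,
    fun ⟨hm, hsf, hdf⟩ => ⟨hp.mul hm, ⟨hrel, hpi.squarefree, hsf⟩, hrel.pow.mul_dvd hpf hdf⟩⟩

theorem sum_neg_one_pow_squarefreeDivisors_of_dvd {j : ℕ} {f p : F[X]} (hj : j ≠ 0)
    (hf : f ≠ 0) (hp : p.Monic) (hpi : Irreducible p) (hpf : p ^ j ∣ f) :
    ∑ d ∈ squarefreeDivisors j f, (-1 : ℤ) ^ cardDistinctFactors d = 0 := by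
  have sign_toggle : ∀ d ∈ squarefreeDivisors j f,
      (-1 : ℤ) ^ cardDistinctFactors d + (-1) ^ cardDistinctFactors (toggleFactor p d) = 0 := by
    intro d hd
    obtain ⟨hdm, hsf, -⟩ := (mem_squarefreeDivisors hj hf).1 hd
    obtain ⟨e, hpe, ⟨rfl, ht⟩ | ⟨rfl, ht⟩⟩ := exists_not_dvd_toggleFactor hpi hsf
    · rw [ht, cardDistinctFactors_mul_of_not_dvd hp hpi hdm.ne_zero hpe]
      ring
    · rw [ht, cardDistinctFactors_mul_of_not_dvd hp hpi (right_ne_zero_of_mul hdm.ne_zero) hpe]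
      ring
  refine sum_involution (fun d _ => toggleFactor p d) sign_toggle
    (fun d hd hne heq => hne (by linarith [sign_toggle d hd, heq ▸ sign_toggle d hd])) ?_
    (fun d hd => toggleFactor_toggleFactor hpi ((mem_squarefreeDivisors hj hf).1 hd).2.1)
  intro d hd
  obtain ⟨e, hpe, ⟨rfl, ht⟩ | ⟨rfl, ht⟩⟩ :=
    exists_not_dvd_toggleFactor hpi ((mem_squarefreeDivisors hj hf).1 hd).2.1
  · rwa [ht, mul_mem_squarefreeDivisors_iff hj hf hp hpi hpf hpe]
  · rwa [ht, ← mul_mem_squarefreeDivisors_iff hj hf hp hpi hpf hpe]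

theorem squarefreeDivisors_eq_singleton_one {j : ℕ} {f : F[X]} (hj : j ≠ 0) (hf : f ≠ 0)
    (h : ∀ p, Irreducible p → ¬ p ^ j ∣ f) : squarefreeDivisors j f = {1} := by
  refine eq_singleton_iff_unique_mem.2 ⟨(mem_squarefreeDivisors hj hf).2
    ⟨monic_one, squarefree_one, by rw [one_pow]; exact one_dvd f⟩, fun d hd => ?_⟩
  obtain ⟨hm, -, hdf⟩ := (mem_squarefreeDivisors hj hf).1 hd
  by_contra hd1
  obtain ⟨p, hpi, hpd⟩ := WfDvdMonoid.exists_irreducible_factor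
    (mt hm.isUnit_iff.1 hd1) hm.ne_zero
  exact h p hpi ((pow_dvd_pow_of_dvd hpd j).trans hdf)

theorem sum_neg_one_pow_squarefreeDivisors {j : ℕ} {f : F[X]} (hj : j ≠ 0) (hf : f ≠ 0) :
    ∑ d ∈ squarefreeDivisors j f, (-1 : ℤ) ^ cardDistinctFactors d =
      if ∀ p, Irreducible p → ¬ p ^ j ∣ f then 1 else 0 := by
  split_ifs with h
  · rw [squarefreeDivisors_eq_singleton_one hj hf h, sum_singleton,
      cardDistinctFactors_one, pow_zero]
  · push Not at h
    obtain ⟨p, hpi, hpf⟩ := h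
    exact sum_neg_one_pow_squarefreeDivisors_of_dvd hj hf (monic_normalize hpi.ne_zero)
      ((normalize_associated p).symm.irreducible hpi)
      ((normalize_associated p).pow_pow.dvd.trans hpf)

theorem card_filter_dvd_monicsOfDegree {d : F[X]} (hd : d.Monic) (n : ℕ) :
    #{f ∈ monicsOfDegree F n | d ∣ f} =
      if d.natDegree ≤ n then Fintype.card F ^ (n - d.natDegree) else 0 := by
  split_ifs with hdn
  · have himage : {f ∈ monicsOfDegree F n | d ∣ f} =
        (monicsOfDegree F (n - d.natDegree)).image (d * ·) := by
      ext f
      simp only [mem_filter, mem_image, mem_monicsOfDegree]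
      constructor
      · rintro ⟨⟨hf, hfn⟩, e, rfl⟩
        have he := hd.of_mul_monic_left hf
        exact ⟨e, ⟨he, by rw [hd.natDegree_mul he] at hfn; omega⟩, rfl⟩
      · rintro ⟨e, ⟨he, hen⟩, rfl⟩
        exact ⟨⟨hd.mul he, by rw [hd.natDegree_mul he]; omega⟩, dvd_mul_right d e⟩
    rw [himage, card_image_of_injective _ (mul_right_injective₀ hd.ne_zero),
      card_monicsOfDegree]
  · refine card_eq_zero.2 (filter_eq_empty_iff.2 fun f hf hdf => hdn ?_)
    obtain ⟨hfm, rfl⟩ := mem_monicsOfDegree.1 hf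
    exact natDegree_le_of_dvd hdf hfm.ne_zero

variable (F) in
noncomputable def moebiusSum (k : ℕ) : ℤ :=
  ∑ d ∈ monicsOfDegree F k with Squarefree d, (-1) ^ cardDistinctFactors d

theorem sum_sum_neg_one_pow_squarefreeDivisors (j n : ℕ) :
    ∑ f ∈ monicsOfDegree F n, ∑ d ∈ squarefreeDivisors j f, (-1 : ℤ) ^ cardDistinctFactors d =
      ∑ k ∈ range (n + 1),
        moebiusSum F k * if j * k ≤ n then (Fintype.card F : ℤ) ^ (n - j * k) else 0 := by
  have hdisj : (range (n + 1) : Set ℕ).PairwiseDisjoint (monicsOfDegree F) :=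
    fun a _ b _ hab => disjoint_left.2 fun f hfa hfb =>
      hab ((mem_monicsOfDegree.1 hfa).2.symm.trans (mem_monicsOfDegree.1 hfb).2)
  calc _ = ∑ f ∈ monicsOfDegree F n, ∑ k ∈ range (n + 1), ∑ d ∈ monicsOfDegree F k,
        if Squarefree d ∧ d ^ j ∣ f then (-1 : ℤ) ^ cardDistinctFactors d else 0 := by
        refine sum_congr rfl fun f hf => ?_
        rw [squarefreeDivisors, (mem_monicsOfDegree.1 hf).2, sum_filter, monicsUpTo,
          sum_biUnion hdisj]
    _ = ∑ k ∈ range (n + 1), ∑ d ∈ monicsOfDegree F k with Squarefree d,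
        (-1 : ℤ) ^ cardDistinctFactors d * #{f ∈ monicsOfDegree F n | d ^ j ∣ f} := by
        rw [sum_comm]
        refine sum_congr rfl fun k _ => ?_
        rw [sum_comm, sum_filter]
        refine sum_congr rfl fun d _ => ?_
        by_cases hsf : Squarefree d
        · simp only [hsf, true_and, if_true, ← sum_filter, sum_const,
            nsmul_eq_mul, mul_comm]
        · simp [hsf]
    _ = _ := by
        refine sum_congr rfl fun k _ => ?_
        rw [moebiusSum, sum_mul]
        refine sum_congr rfl fun d hd => ?_
        obtain ⟨hdm, rfl⟩ := mem_monicsOfDegree.1 (mem_filter.1 hd).1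
        rw [card_filter_dvd_monicsOfDegree (hdm.pow j), natDegree_pow]
        split_ifs <;> simp

theorem sum_moebiusSum_mul_pow (n : ℕ) :
    ∑ k ∈ range (n + 1), moebiusSum F k * (Fintype.card F : ℤ) ^ (n - k) =
      if n = 0 then 1 else 0 := by
  calc _ = ∑ k ∈ range (n + 1),
        moebiusSum F k * if 1 * k ≤ n then (Fintype.card F : ℤ) ^ (n - 1 * k) else 0 :=
        sum_congr rfl fun k hk => by
          rw [one_mul, if_pos (Nat.lt_succ_iff.1 (mem_range.1 hk))]
    _ = ∑ f ∈ monicsOfDegree F n, if n = 0 then 1 else 0 := by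
        rw [← sum_sum_neg_one_pow_squarefreeDivisors]
        refine sum_congr rfl fun f hf => ?_
        obtain ⟨hfm, rfl⟩ := mem_monicsOfDegree.1 hf
        simp_rw [sum_neg_one_pow_squarefreeDivisors one_ne_zero hfm.ne_zero, pow_one,
          ← isUnit_iff_forall_irreducible_not_dvd hfm.ne_zero, hfm.isUnit_iff,
          ← hfm.natDegree_eq_zero]
    _ = _ := by
        split_ifs with hn
        · rw [hn, sum_const, card_monicsOfDegree, pow_zero, one_smul]
        · exact sum_const_zero

theorem moebiusSum_zero : moebiusSum F 0 = 1 := by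
  simpa using sum_moebiusSum_mul_pow (F := F) 0

theorem moebiusSum_succ (n : ℕ) :
    moebiusSum F (n + 1) = if n = 0 then -(Fintype.card F : ℤ) else 0 := by
  have h := sum_moebiusSum_mul_pow (F := F) (n + 1)
  have hshift : ∑ k ∈ range (n + 1), moebiusSum F k * (Fintype.card F : ℤ) ^ (n + 1 - k) =
      Fintype.card F * ∑ k ∈ range (n + 1), moebiusSum F k * (Fintype.card F : ℤ) ^ (n - k) := by
    rw [mul_sum]
    refine sum_congr rfl fun k hk => ?_
    rw [Nat.sub_add_comm (Nat.lt_succ_iff.1 (mem_range.1 hk)), pow_succ]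
    ring
  rw [sum_range_succ, Nat.sub_self, pow_zero, mul_one, if_neg n.succ_ne_zero, hshift,
    sum_moebiusSum_mul_pow] at h
  split_ifs at h ⊢ <;> linarith

theorem moebiusSum_eq_zero {n : ℕ} (hn : 2 ≤ n) : moebiusSum F n = 0 := by
  obtain ⟨m, rfl⟩ := Nat.exists_eq_add_of_le' hn
  rw [moebiusSum_succ, if_neg (by omega)]

theorem card_filter_squarefree_monicsOfDegree {n : ℕ} (hn : 2 ≤ n) :
    (#{f ∈ monicsOfDegree F n | Squarefree f} : ℤ) =
      (Fintype.card F : ℤ) ^ n - (Fintype.card F : ℤ) ^ (n - 1) := by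
  obtain ⟨m, rfl⟩ := Nat.exists_eq_add_of_le' hn
  calc _ = ∑ f ∈ monicsOfDegree F (m + 2), ∑ d ∈ squarefreeDivisors 2 f,
        (-1 : ℤ) ^ cardDistinctFactors d := by
        rw [natCast_card_filter]
        refine sum_congr rfl fun f hf => ?_
        have hf0 := (mem_monicsOfDegree.1 hf).1.ne_zero
        simp_rw [sum_neg_one_pow_squarefreeDivisors two_ne_zero hf0,
          squarefree_iff_irreducible_sq_not_dvd_of_ne_zero hf0, sq]
    _ = _ := by
        rw [sum_sum_neg_one_pow_squarefreeDivisors, sum_range_succ', sum_range_succ',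
          sum_eq_zero fun k _ => by rw [moebiusSum_eq_zero (by omega), zero_mul], moebiusSum_zero,
          moebiusSum_succ, if_pos rfl, if_pos (by omega), if_pos (by omega),
          show m + 2 - 2 * 1 = m by omega, show m + 2 - 2 * 0 = m + 2 by omega,
          show m + 2 - 1 = m + 1 by omega]
        ring

theorem moebiusSum_eq_card_sub_card (n : ℕ) :
    moebiusSum F n = #{f ∈ monicsOfDegree F n | Squarefree f ∧ Even (cardDistinctFactors f)} -
      (#{f ∈ monicsOfDegree F n | Squarefree f ∧ Odd (cardDistinctFactors f)} : ℤ) := by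
  rw [moebiusSum, ← sum_filter_add_sum_filter_not _ fun f => Even (cardDistinctFactors f),
    sum_eq_card_nsmul fun f hf => (mem_filter.1 hf).2.neg_one_pow,
    sum_eq_card_nsmul fun f hf => (Nat.not_even_iff_odd.1 (mem_filter.1 hf).2).neg_one_pow,
    filter_filter, filter_filter]
  simp_rw [Nat.not_even_iff_odd]
  simp [sub_eq_add_neg]

theorem card_filter_squarefree_eq_add (n : ℕ) :
    #{f ∈ monicsOfDegree F n | Squarefree f} =
      #{f ∈ monicsOfDegree F n | Squarefree f ∧ Even (cardDistinctFactors f)} +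
        #{f ∈ monicsOfDegree F n | Squarefree f ∧ Odd (cardDistinctFactors f)} := by
  rw [← card_filter_add_card_filter_not fun f => Even (cardDistinctFactors f),
    filter_filter, filter_filter]
  simp_rw [Nat.not_even_iff_odd]

theorem card_filter_even_eq_card_filter_odd {n : ℕ} (hn : 2 ≤ n) :
    #{f ∈ monicsOfDegree F n | Squarefree f ∧ Even (cardDistinctFactors f)} =
      #{f ∈ monicsOfDegree F n | Squarefree f ∧ Odd (cardDistinctFactors f)} := by
  have h := moebiusSum_eq_card_sub_card (F := F) n
  rw [moebiusSum_eq_zero hn] at h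
  omega

theorem two_mul_card_filter_even {n : ℕ} (hn : 2 ≤ n) :
    2 * #{f ∈ monicsOfDegree F n | Squarefree f ∧ Even (cardDistinctFactors f)} =
      Fintype.card F ^ n - Fintype.card F ^ (n - 1) := by
  have h := card_filter_squarefree_monicsOfDegree (F := F) hn
  rw [card_filter_squarefree_eq_add, ← card_filter_even_eq_card_filter_odd hn] at h
  have hle : Fintype.card F ^ (n - 1) ≤ Fintype.card F ^ n :=
    Nat.pow_le_pow_right Fintype.card_pos (Nat.sub_le n 1)
  zify [hle]
  push_cast at h
  linarith

theorem natCard_eq_card_filter (n : ℕ) (P : F[X] → Prop) [DecidablePred P] :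
    Nat.card {f : F[X] // f.Monic ∧ Squarefree f ∧ f.natDegree = n ∧ P f} =
      #{f ∈ monicsOfDegree F n | Squarefree f ∧ P f} := by
  rw [← Nat.card_eq_finsetCard]
  exact Nat.card_congr (Equiv.subtypeEquivRight fun f => by
    simp only [mem_filter, mem_monicsOfDegree]
    tauto)

end FiniteField

end Polynomial

/-- For `n ≥ 2`, the number of monic square-free degree-`n` polynomials with an even
number of monic irreducible factors equals the number with an odd number of monic
irreducible factors, and each count equals `(q^n - q^(n-1))/2`. -/
theorem card_even_eq_card_odd_factors (F : Type*) [Field F] [Fintype F]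
    (q : ℕ) (hq : q = Fintype.card F) (n : ℕ) (hn : 2 ≤ n) :
    Nat.card {f : F[X] // f.Monic ∧ Squarefree f ∧ f.natDegree = n ∧
        Even (Nat.card {g : F[X] // g.Monic ∧ Irreducible g ∧ g ∣ f})}
      = Nat.card {f : F[X] // f.Monic ∧ Squarefree f ∧ f.natDegree = n ∧
        Odd (Nat.card {g : F[X] // g.Monic ∧ Irreducible g ∧ g ∣ f})}
    ∧ 2 * Nat.card {f : F[X] // f.Monic ∧ Squarefree f ∧ f.natDegree = n ∧
        Even (Nat.card {g : F[X] // g.Monic ∧ Irreducible g ∧ g ∣ f})}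
      = q ^ n - q ^ (n - 1) := by
  subst hq
  have hE := natCard_eq_card_filter (F := F) n fun f => Even (cardDistinctFactors f)
  have hO := natCard_eq_card_filter (F := F) n fun f => Odd (cardDistinctFactors f)
  exact ⟨hE.trans ((card_filter_even_eq_card_filter_odd hn).trans hO.symm),
    (congrArg (2 * ·) hE).trans (two_mul_card_filter_even (F := F) hn)⟩
end

section
/- Let q ≥ 2 be an integer (e.g. a prime power) and n ≥ 1. Then ∑_{λ ⊢ n} m₁(λ) · |GL_n(q)| / w_q(λ) = q^{n²−n} · (1 + 1/q + 1/q² + ⋯ + 1/q^{n−1}), as an identity in ℚ. (Since |GL_n(q)|/w_q(λ) is the number of F-stable maximal tori of GL_n(F̄_q) of type λ and m₁(λ) is the number of eigenvectors of such a torus, this says the expected number of eigenvectors of a uniformly random F-stable maximal torus of GL_n(F̄_q) is ∑_{i=0}^{n−1} q^{−i}.) -/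
/-!
Put `x = q` and `G(m) = ∑_{λ ⊢ m} 1 / w_x(λ)`. Deleting one part equal to `i` identifies the
partitions of `m` having `i` as a part with the partitions of `m - i`, and it divides `w_x(λ)` by
`i m_i(λ) (x^i - 1)`. So the left-hand side of the theorem is `|GL_n(q)| G(n - 1) / (q - 1)`.
Also `∑ᵢ i m_i(λ) = m`, so the same bijection gives
`m G(m) = ∑_{i=1}^m G(m - i) / (x^i - 1)`. This recursion determines `G`. Its solution is
`G(m) = ∏_{k<m} x^k / (x^(k+1) - 1)`, which we check with the telescoping identity
`∑_{k ≤ m} G(k) = x^m G(m)`. The remaining step is algebra with `|GL_n(q)|`.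
-/

open Finset

namespace Nat.Partition

lemma toFinset_parts_subset_Icc {n : ℕ} (P : n.Partition) : P.parts.toFinset ⊆ Icc 1 n := by
  intro i hi
  rw [Multiset.mem_toFinset] at hi
  exact mem_Icc.2 ⟨P.parts_pos hi, P.le_of_mem_parts hi⟩

lemma sum_mul_count_eq {n : ℕ} (P : n.Partition) : ∑ i ∈ Icc 1 n, i * P.parts.count i = n := by
  rw [← sum_subset P.toFinset_parts_subset_Icc fun i _ hi => by
    rw [Multiset.count_eq_zero_of_notMem (mt Multiset.mem_toFinset.2 hi), mul_zero]]
  simpa [mul_comm] using (sum_multiset_count P.parts).symm.trans P.parts_sum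

end Nat.Partition

lemma prod_range_succ_pow_sub_pow {R : Type*} [CommRing R] (y : R) (n : ℕ) :
    ∏ i ∈ range (n + 1), (y ^ (n + 1) - y ^ i) =
      (y ^ (n + 1) - 1) * y ^ n * ∏ i ∈ range n, (y ^ n - y ^ i) := by
  have h : ∏ i ∈ range n, (y ^ (n + 1) - y ^ (i + 1)) = ∏ i ∈ range n, (y * (y ^ n - y ^ i)) :=
    prod_congr rfl fun i _ => by ring
  rw [prod_range_succ', pow_zero, h, prod_mul_distrib, prod_const, card_range]
  ring

lemma pow_mul_pow_sub_one_div_sub_one {K : Type*} [Field K] {y : K} (hy0 : y ≠ 0) (hy1 : y ≠ 1)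
    (t : ℕ) :
    y ^ (t * t) * (y ^ (t + 1) - 1) / (y - 1) =
      y ^ ((t + 1) ^ 2 - (t + 1)) * ∑ i ∈ range (t + 1), 1 / y ^ i := by
  rw [show (t + 1) ^ 2 - (t + 1) = t * t + t from Nat.sub_eq_of_eq_add (by ring)]
  simp only [one_div, ← inv_pow]
  rw [geom_sum_inv hy1 hy0, inv_pow]
  field_simp
  ring

namespace MaximalTori

variable {K : Type*} [Field K] {x : K}

lemma pow_sub_one_ne_zero_of_not_isOfFinOrder (hx : ¬IsOfFinOrder x) {i : ℕ} (hi : 0 < i) :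
    x ^ i - 1 ≠ 0 :=
  sub_ne_zero.2 fun h => hx (isOfFinOrder_iff_pow_eq_one.2 ⟨i, hi, h⟩)

/-- `invWeightProd x m = x ^ (m² - m) / |GL_m(x)|`, matching Steinberg's count `q ^ (m² - m)` of
the `F`-stable maximal tori of `GL_m`. -/
def invWeightProd (x : K) (m : ℕ) : K := ∏ k ∈ range m, x ^ k / (x ^ (k + 1) - 1)

@[simp] lemma invWeightProd_zero : invWeightProd x 0 = 1 := prod_range_zero _

lemma invWeightProd_succ (m : ℕ) :
    invWeightProd x (m + 1) = invWeightProd x m * (x ^ m / (x ^ (m + 1) - 1)) :=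
  prod_range_succ _ _

lemma sum_range_succ_invWeightProd (hx : ¬IsOfFinOrder x) (m : ℕ) :
    ∑ k ∈ range (m + 1), invWeightProd x k = x ^ m * invWeightProd x m := by
  induction m with
  | zero => simp
  | succ m ih =>
    have := pow_sub_one_ne_zero_of_not_isOfFinOrder hx m.succ_pos
    rw [sum_range_succ, ih, invWeightProd_succ]
    field_simp
    ring

lemma invWeightProd_succ_div_pow_sub_one (hx : ¬IsOfFinOrder x) {k m : ℕ} (hkm : k < m) :
    invWeightProd x (k + 1) / (x ^ (m - k) - 1) =
      x ^ m / (x ^ (m + 1) - 1) * (invWeightProd x k / (x ^ (m - k) - 1)) +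
        invWeightProd x (k + 1) / (x ^ (m + 1) - 1) := by
  obtain ⟨j, rfl⟩ := Nat.exists_eq_add_of_lt hkm
  have hk := pow_sub_one_ne_zero_of_not_isOfFinOrder hx k.succ_pos
  have hj := pow_sub_one_ne_zero_of_not_isOfFinOrder hx j.succ_pos
  have hm := pow_sub_one_ne_zero_of_not_isOfFinOrder hx (k + j + 1).succ_pos
  rw [show k + j + 1 - k = j + 1 by omega, invWeightProd_succ]
  field_simp
  ring

lemma sum_range_invWeightProd_div (hx : ¬IsOfFinOrder x) (m : ℕ) :
    ∑ k ∈ range m, invWeightProd x k / (x ^ (m - k) - 1) = m * invWeightProd x m := by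
  induction m with
  | zero => simp
  | succ m ih =>
    have hm := pow_sub_one_ne_zero_of_not_isOfFinOrder hx m.succ_pos
    rw [sum_range_succ', Nat.sub_zero, sum_congr rfl fun k hk => by
      rw [Nat.add_sub_add_right, invWeightProd_succ_div_pow_sub_one hx (mem_range.1 hk)],
      sum_add_distrib, ← mul_sum, ← sum_div, ih, add_assoc, ← add_div,
      ← sum_range_succ' (invWeightProd x), sum_range_succ_invWeightProd hx, invWeightProd_succ]
    field_simp
    push_cast
    ring

lemma prod_pow_sub_pow_mul_invWeightProd (hx : ¬IsOfFinOrder x) (t : ℕ) :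
    (∏ i ∈ range (t + 1), (x ^ (t + 1) - x ^ i)) * invWeightProd x t =
      x ^ (t * t) * (x ^ (t + 1) - 1) := by
  induction t with
  | zero => simp
  | succ t ih =>
    have ht := pow_sub_one_ne_zero_of_not_isOfFinOrder hx t.succ_pos
    rw [prod_range_succ_pow_sub_pow, invWeightProd_succ]
    calc
      _ = (x ^ (t + 1 + 1) - 1) * x ^ (t + 1) * x ^ t / (x ^ (t + 1) - 1) *
          ((∏ i ∈ range (t + 1), (x ^ (t + 1) - x ^ i)) * invWeightProd x t) := by ring
      _ = _ := by rw [ih]; field_simp; ring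

def weightFactor (x : K) (i c : ℕ) : K := (i : K) ^ c * (c.factorial : K) * (x ^ i - 1) ^ c

lemma weightFactor_succ (i c : ℕ) :
    weightFactor x i (c + 1) = i * (c + 1) * (x ^ i - 1) * weightFactor x i c := by
  simp only [weightFactor, Nat.factorial_succ]
  push_cast
  ring

/-- `w_x(λ)` for the partition `λ` with multiset of parts `s`. -/
def torusWeight (x : K) (s : Multiset ℕ) : K := ∏ i ∈ s.toFinset, weightFactor x i (s.count i)

lemma torusWeight_eq_prod_of_subset {s : Multiset ℕ} {T : Finset ℕ} (h : s.toFinset ⊆ T) :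
    torusWeight x s = ∏ i ∈ T, weightFactor x i (s.count i) :=
  prod_subset h fun i _ hi => by
    rw [Multiset.count_eq_zero_of_notMem (mt Multiset.mem_toFinset.2 hi)]
    simp [weightFactor]

lemma torusWeight_cons (i : ℕ) (s : Multiset ℕ) :
    torusWeight x (i ::ₘ s) = i * (s.count i + 1) * (x ^ i - 1) * torusWeight x s := by
  have hi := mem_insert_self i s.toFinset
  rw [torusWeight_eq_prod_of_subset (Multiset.toFinset_cons i s).subset,
    torusWeight_eq_prod_of_subset (subset_insert i s.toFinset), ← mul_prod_erase _ _ hi,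
    ← mul_prod_erase _ _ hi, Multiset.count_cons_self, weightFactor_succ,
    prod_congr rfl fun j hj => by rw [Multiset.count_cons_of_ne (ne_of_mem_erase hj)]]
  ring

def invWeightSum (x : K) (m : ℕ) : K := ∑ P : m.Partition, (torusWeight x P.parts)⁻¹

@[simp] lemma invWeightSum_zero : invWeightSum x 0 = 1 := by
  simp [invWeightSum, torusWeight]

variable [CharZero K]

lemma torusWeight_ne_zero (hx : ¬IsOfFinOrder x) {s : Multiset ℕ} (hs : ∀ i ∈ s, 0 < i) :
    torusWeight x s ≠ 0 :=
  prod_ne_zero_iff.2 fun i hi => by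
    have hi := hs i (Multiset.mem_toFinset.1 hi)
    exact mul_ne_zero (mul_ne_zero (pow_ne_zero _ (Nat.cast_ne_zero.2 hi.ne'))
      (Nat.cast_ne_zero.2 (Nat.factorial_ne_zero _)))
      (pow_ne_zero _ (pow_sub_one_ne_zero_of_not_isOfFinOrder hx hi))

lemma sum_mul_count_div_torusWeight (hx : ¬IsOfFinOrder x) {m i : ℕ} (hi : 1 ≤ i) (him : i ≤ m) :
    ∑ P : m.Partition, i * P.parts.count i / torusWeight x P.parts =
      invWeightSum x (m - i) / (x ^ i - 1) := by
  rw [← Fintype.sum_subtype_add_sum_subtype (fun P : m.Partition => i ∈ P.parts),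
    Fintype.sum_eq_zero (α := {P : m.Partition // i ∉ P.parts}) _ fun P => by
      simp [Multiset.count_eq_zero_of_notMem P.2],
    add_zero, ← (Nat.Partition.partitionWithPartEquiv hi him).symm.sum_comp, invWeightSum, sum_div]
  refine sum_congr rfl fun μ _ => ?_
  have hμ := torusWeight_ne_zero hx fun j hj => μ.parts_pos hj
  have hxi := pow_sub_one_ne_zero_of_not_isOfFinOrder hx hi
  have hi0 : (i : K) ≠ 0 := by exact_mod_cast (by omega : i ≠ 0)
  rw [Nat.Partition.partitionWithPartEquiv_symm_apply_parts, Multiset.count_cons_self,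
    torusWeight_cons]
  push_cast
  field_simp

lemma mul_invWeightSum (hx : ¬IsOfFinOrder x) (m : ℕ) :
    m * invWeightSum x m = ∑ i ∈ Icc 1 m, invWeightSum x (m - i) / (x ^ i - 1) := by
  have hm (P : m.Partition) : m * (torusWeight x P.parts)⁻¹ =
      ∑ i ∈ Icc 1 m, i * P.parts.count i / torusWeight x P.parts := by
    rw [← sum_div, div_eq_mul_inv]
    exact_mod_cast congrArg (fun n : ℕ => (n : K) * (torusWeight x P.parts)⁻¹)
      P.sum_mul_count_eq.symm
  simp only [invWeightSum, mul_sum, hm]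
  rw [sum_comm]
  exact sum_congr rfl fun i hi =>
    sum_mul_count_div_torusWeight hx (mem_Icc.1 hi).1 (mem_Icc.1 hi).2

theorem invWeightSum_eq_invWeightProd (hx : ¬IsOfFinOrder x) (m : ℕ) :
    invWeightSum x m = invWeightProd x m := by
  induction m using Nat.strong_induction_on with
  | _ m ih =>
    rcases m.eq_zero_or_pos with rfl | hm
    · simp
    refine mul_left_cancel₀ (Nat.cast_ne_zero.2 hm.ne') ?_
    rw [mul_invWeightSum hx, ← sum_range_invWeightProd_div hx]
    refine sum_nbij' (m - ·) (m - ·) ?_ ?_ ?_ ?_ ?_ <;> intro i hi <;>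
      simp only [mem_Icc, mem_range] at hi ⊢
    · omega
    · omega
    · omega
    · omega
    · rw [ih _ (by omega), Nat.sub_sub_self hi.2]

end MaximalTori

open MaximalTori

/-- The expected number of eigenvectors of a random `F`-stable maximal torus of
`GL_n(F̄_q)`: `∑_{λ ⊢ n} m₁(λ) |GL_n(q)| / w_q(λ) = q^(n²-n) (1 + 1/q + ⋯ + 1/q^(n-1))`. -/
theorem sum_tori_eigenvectors (q : ℕ) (hq : 2 ≤ q) (n : ℕ) (hn : 1 ≤ n) :
    ∑ P : Nat.Partition n,
        (P.parts.count 1 : ℚ) *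
          ((∏ i ∈ range n, ((q : ℚ) ^ n - (q : ℚ) ^ i)) /
            (∏ i ∈ Icc 1 n,
              ((i : ℚ) ^ (P.parts.count i) * (Nat.factorial (P.parts.count i) : ℚ) *
                ((q : ℚ) ^ i - 1) ^ (P.parts.count i))))
      = (q : ℚ) ^ (n ^ 2 - n) * ∑ i ∈ range n, 1 / (q : ℚ) ^ i := by
  have hx : ¬IsOfFinOrder (q : ℚ) := fun h => by
    have := h.eq_one (Nat.cast_nonneg q)
    norm_cast at this
    omega
  obtain ⟨t, rfl⟩ := Nat.exists_eq_add_of_le' hn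
  calc
    _ = (∏ i ∈ range (t + 1), ((q : ℚ) ^ (t + 1) - (q : ℚ) ^ i)) *
        ∑ P : (t + 1).Partition, ((1 : ℕ) : ℚ) * P.parts.count 1 / torusWeight (q : ℚ) P.parts := by
      rw [mul_sum]
      refine sum_congr rfl fun P _ => ?_
      rw [torusWeight_eq_prod_of_subset P.toFinset_parts_subset_Icc]
      simp only [weightFactor]
      ring
    _ = (q : ℚ) ^ (t * t) * ((q : ℚ) ^ (t + 1) - 1) / ((q : ℚ) - 1) := by
      rw [sum_mul_count_div_torusWeight hx le_rfl hn, Nat.add_sub_cancel,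
        invWeightSum_eq_invWeightProd hx, pow_one, ← mul_div_assoc,
        prod_pow_sub_pow_mul_invWeightProd hx]
    _ = _ :=
      pow_mul_pow_sub_one_div_sub_one (by positivity) (by exact_mod_cast (by omega : q ≠ 1)) t
end

section
/- Let q ≥ 2 be an integer (e.g. a prime power) and n ≥ 2. Then ∑_{λ ⊢ n} m₂(λ) · |GL_n(q)| / w_q(λ) = q^{n²−n} · q²(1 − 1/q^{n−1})(1 − 1/q^n)/(2(q² − 1)), as an identity in ℚ. (Equivalently, the expected number of parts of size 2, i.e. of irreducible dimension-two subtori, of a uniformly random F-stable maximal torus of GL_n(F̄_q) is q²(1 − q^{1−n})(1 − q^{−n})/(2(q² − 1)).) -/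
/-!
For `a : ℕ → K` write `a_λ / z_λ = ∏ᵢ aᵢ^{mᵢ} / (i^{mᵢ} mᵢ!)`, so that `Z_m(a) = ∑_{λ ⊢ m} a_λ / z_λ`
is the cycle index of `S_m` evaluated at `pᵢ = aᵢ`. Removing one part `i` from `λ` gives
`∑_{λ ⊢ m} mᵢ(λ) a_λ / z_λ = (aᵢ / i) Z_{m-i}(a)`, and weighting this by `i` and summing over `i`
gives Newton's recursion `m Z_m = ∑_{i=1}^m aᵢ Z_{m-i}`.

For `aᵢ = 1 / (qⁱ - 1) = yⁱ / (1 - yⁱ)` with `y = 1/q` the recursion is solved by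
`Z_m = y^m / (y; y)_m`, and `|GL_n(q)| = q^{n²} (y; y)_n`. The sum in the theorem is
`|GL_n(q)| (a₂ / 2) Z_{n-2}`, in which all but two factors of `(y; y)_n` cancel.
-/

open Finset

theorem Nat.Partition.toFinset_parts_subset_Icc_s13 {n : ℕ} (P : n.Partition) :
    P.parts.toFinset ⊆ Icc 1 n := fun i hi => by
  rw [Multiset.mem_toFinset] at hi
  exact mem_Icc.mpr ⟨P.parts_pos hi, P.le_of_mem_parts hi⟩

theorem Nat.Partition.sum_count_mul_eq {n : ℕ} (P : n.Partition) :
    ∑ i ∈ Icc 1 n, P.parts.count i * i = n := by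
  rw [← sum_subset P.toFinset_parts_subset_Icc_s13 fun i _ hi => by
    simp [Multiset.count_eq_zero_of_notMem (by simpa using hi)]]
  exact (sum_multiset_count P.parts).symm.trans P.parts_sum

variable {K : Type*} [Field K]

def cycleIndexTerm (a : ℕ → K) (s : Multiset ℕ) : K :=
  ∏ i ∈ s.toFinset, a i ^ s.count i / ((i : K) ^ s.count i * (s.count i).factorial)

def cycleIndex (a : ℕ → K) (m : ℕ) : K :=
  ∑ P : m.Partition, cycleIndexTerm a P.parts

theorem cycleIndexTerm_eq_prod_of_subset (a : ℕ → K) {s : Multiset ℕ} {F : Finset ℕ}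
    (h : s.toFinset ⊆ F) :
    cycleIndexTerm a s =
      ∏ i ∈ F, a i ^ s.count i / ((i : K) ^ s.count i * (s.count i).factorial) :=
  prod_subset h fun i _ hi => by simp [Multiset.count_eq_zero_of_notMem (by simpa using hi)]

theorem cycleIndexTerm_cons (a : ℕ → K) (i : ℕ) (s : Multiset ℕ) :
    cycleIndexTerm a (i ::ₘ s) = a i / (i * (s.count i + 1)) * cycleIndexTerm a s := by
  rw [cycleIndexTerm_eq_prod_of_subset a (by simp : (i ::ₘ s).toFinset ⊆ insert i s.toFinset),
    cycleIndexTerm_eq_prod_of_subset a (subset_insert i s.toFinset),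
    ← mul_prod_erase _ _ (mem_insert_self i _),
    ← mul_prod_erase (insert i s.toFinset) _ (mem_insert_self i _), ← mul_assoc]
  congr 1
  · simp only [Multiset.count_cons_self, pow_succ, Nat.factorial_succ]
    push_cast
    simp only [div_eq_mul_inv, mul_inv]
    ring
  · refine prod_congr rfl fun j hj => ?_
    rw [Multiset.count_cons_of_ne (ne_of_mem_erase hj)]

theorem sum_count_mul_cycleIndexTerm [CharZero K] (a : ℕ → K) {i m : ℕ} (hi : 1 ≤ i)
    (him : i ≤ m) :
    ∑ P : m.Partition, (P.parts.count i : K) * cycleIndexTerm a P.parts =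
      a i / i * cycleIndex a (m - i) := by
  let e := Nat.Partition.partitionWithPartEquiv hi him
  rw [← Fintype.sum_subtype_add_sum_subtype (fun P : m.Partition => i ∈ P.parts),
    Fintype.sum_eq_zero (fun P : {P : m.Partition // i ∉ P.parts} => _) fun P => by
      simp [Multiset.count_eq_zero_of_notMem P.2], add_zero, cycleIndex, mul_sum,
    ← e.symm.sum_comp]
  refine Fintype.sum_congr _ _ fun Q => ?_
  rw [Nat.Partition.partitionWithPartEquiv_symm_apply_parts, cycleIndexTerm_cons,
    Multiset.count_cons_self]
  have : ((Q.parts.count i : K) + 1) ≠ 0 := Nat.cast_add_one_ne_zero _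
  push_cast
  field_simp

theorem mul_cycleIndex [CharZero K] (a : ℕ → K) (m : ℕ) :
    (m : K) * cycleIndex a m = ∑ i ∈ Icc 1 m, a i * cycleIndex a (m - i) := by
  have hsum (i : ℕ) (hi : i ∈ Icc 1 m) : a i * cycleIndex a (m - i) =
      ∑ P : m.Partition, (i : K) * (P.parts.count i * cycleIndexTerm a P.parts) := by
    obtain ⟨hi1, him⟩ := mem_Icc.mp hi
    have : (i : K) ≠ 0 := Nat.cast_ne_zero.mpr (by lia)
    rw [← mul_sum, sum_count_mul_cycleIndexTerm a hi1 him]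
    field_simp
  rw [sum_congr rfl hsum, sum_comm, cycleIndex, mul_sum]
  refine sum_congr rfl fun P _ => ?_
  have hm : (m : K) = ∑ i ∈ Icc 1 m, (P.parts.count i : K) * i := by
    exact_mod_cast P.sum_count_mul_eq.symm
  rw [hm, sum_mul]
  exact sum_congr rfl fun i _ => by ring

-- The q-Pochhammer symbol `(y; y)_m`.
def qPochhammer (y : K) (m : ℕ) : K :=
  ∏ j ∈ range m, (1 - y ^ (j + 1))

@[simp]
theorem qPochhammer_zero (y : K) : qPochhammer y 0 = 1 :=
  prod_range_zero _

theorem qPochhammer_succ (y : K) (m : ℕ) :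
    qPochhammer y (m + 1) = qPochhammer y m * (1 - y ^ (m + 1)) :=
  prod_range_succ _ _

theorem one_sub_pow_ne_zero {y : K} (hy : ¬IsOfFinOrder y) {j : ℕ} (hj : j ≠ 0) :
    1 - y ^ j ≠ 0 :=
  sub_ne_zero.mpr fun h => hy (isOfFinOrder_iff_pow_eq_one.mpr ⟨j, Nat.pos_of_ne_zero hj, h.symm⟩)

theorem qPochhammer_ne_zero {y : K} (hy : ¬IsOfFinOrder y) (m : ℕ) : qPochhammer y m ≠ 0 :=
  prod_ne_zero_iff.mpr fun j _ => one_sub_pow_ne_zero hy j.succ_ne_zero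

theorem prod_range_pow_sub_pow {x : K} (hx : x ≠ 0) (n : ℕ) :
    ∏ i ∈ range n, (x ^ n - x ^ i) = x ^ (n ^ 2) * qPochhammer x⁻¹ n := by
  have hpow : x ^ (n ^ 2) = ∏ _i ∈ range n, x ^ n := by
    rw [prod_const, card_range, ← pow_mul, sq]
  rw [qPochhammer, ← prod_range_reflect (fun j => 1 - x⁻¹ ^ (j + 1)), hpow, ← prod_mul_distrib]
  refine prod_congr rfl fun i hi => ?_
  have hin : n - 1 - i + 1 = n - i := by have := mem_range.mp hi; lia
  rw [hin, mul_sub, mul_one, inv_pow, ← pow_sub₀ _ hx (Nat.sub_le n i),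
    Nat.sub_sub_self (mem_range.mp hi).le]

theorem sum_range_pow_div_qPochhammer {y : K} (hy : ¬IsOfFinOrder y) (m : ℕ) :
    ∑ k ∈ range m, y ^ (k + 1) / qPochhammer y (k + 1) = (qPochhammer y m)⁻¹ - 1 := by
  have htele (k : ℕ) : y ^ (k + 1) / qPochhammer y (k + 1) =
      (qPochhammer y (k + 1))⁻¹ - (qPochhammer y k)⁻¹ := by
    have := qPochhammer_ne_zero hy k
    have := one_sub_pow_ne_zero hy k.succ_ne_zero
    rw [qPochhammer_succ]
    field_simp
    ring
  simp_rw [htele]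
  rw [sum_range_sub fun k => (qPochhammer y k)⁻¹, qPochhammer_zero, inv_one]

theorem sum_range_inv_mul_qPochhammer {y : K} (hy : ¬IsOfFinOrder y) (m : ℕ) :
    ∑ j ∈ range m, ((1 - y ^ (m - j)) * qPochhammer y j)⁻¹ = m / qPochhammer y m := by
  induction m with
  | zero => simp
  | succ m ih =>
    -- `1 - y^(m+1) = (1 - y^(j+1)) + y^(j+1) (1 - y^(m-j))`
    have hstep (j : ℕ) (hj : j ∈ range m) :
        ((1 - y ^ (m + 1 - (j + 1))) * qPochhammer y (j + 1))⁻¹ =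
          (((1 - y ^ (m - j)) * qPochhammer y j)⁻¹ + y ^ (j + 1) / qPochhammer y (j + 1)) /
            (1 - y ^ (m + 1)) := by
      have hjm : m + 1 = (m - j) + (j + 1) := by have := mem_range.mp hj; lia
      have := qPochhammer_ne_zero hy j
      have : 1 - y ^ (j + 1) ≠ 0 := one_sub_pow_ne_zero hy j.succ_ne_zero
      have : 1 - y ^ (m - j) ≠ 0 :=
        one_sub_pow_ne_zero hy (Nat.sub_ne_zero_of_lt (mem_range.mp hj))
      have hm : 1 - y ^ (m + 1) ≠ 0 := one_sub_pow_ne_zero hy m.succ_ne_zero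
      rw [Nat.add_sub_add_right, qPochhammer_succ]
      rw [hjm, pow_add y (m - j) (j + 1)] at hm ⊢
      field_simp
      ring
    have := qPochhammer_ne_zero hy m
    have := one_sub_pow_ne_zero hy m.succ_ne_zero
    rw [sum_range_succ', sum_congr rfl hstep, Nat.sub_zero, qPochhammer_zero, ← sum_div,
      sum_add_distrib, ih, sum_range_pow_div_qPochhammer hy, qPochhammer_succ]
    field_simp
    push_cast
    ring

theorem cycleIndex_pow_div_one_sub_pow [CharZero K] {y : K} (hy : ¬IsOfFinOrder y) (m : ℕ) :
    cycleIndex (fun i => y ^ i / (1 - y ^ i)) m = y ^ m / qPochhammer y m := by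
  induction m using Nat.strong_induction_on with
  | _ m ih =>
  rcases Nat.eq_zero_or_pos m with rfl | hm
  · simp [cycleIndex, cycleIndexTerm]
  refine mul_left_cancel₀ (Nat.cast_ne_zero.mpr hm.ne') ((mul_cycleIndex _ m).trans ?_)
  calc ∑ i ∈ Icc 1 m, y ^ i / (1 - y ^ i) * cycleIndex (fun i => y ^ i / (1 - y ^ i)) (m - i)
      = ∑ i ∈ Icc 1 m, y ^ m * ((1 - y ^ (m - (m - i))) * qPochhammer y (m - i))⁻¹ := by
        refine sum_congr rfl fun i hi => ?_
        obtain ⟨hi1, him⟩ := mem_Icc.mp hi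
        rw [ih (m - i) (by lia), div_mul_div_comm, ← pow_add, Nat.add_sub_cancel' him,
          Nat.sub_sub_self him, div_eq_mul_inv, mul_comm (1 - y ^ i)]
    _ = y ^ m * ∑ j ∈ range m, ((1 - y ^ (m - j)) * qPochhammer y j)⁻¹ := by
        rw [mul_sum]
        refine sum_nbij' (fun i => m - i) (fun j => m - j) ?_ ?_ ?_ ?_ fun _ _ => rfl <;>
          intro i hi <;> simp only [mem_Icc, mem_range] at hi ⊢ <;> lia
    _ = m * (y ^ m / qPochhammer y m) := by
        rw [sum_range_inv_mul_qPochhammer hy]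
        ring

theorem cycleIndex_inv_pow_sub_one [CharZero K] {x : K} (hx : x ≠ 0) (hy : ¬IsOfFinOrder x⁻¹)
    (m : ℕ) : cycleIndex (fun i => (x ^ i - 1)⁻¹) m = x⁻¹ ^ m / qPochhammer x⁻¹ m := by
  rw [← cycleIndex_pow_div_one_sub_pow hy]
  congr
  funext i
  rw [inv_pow, div_eq_mul_inv, ← mul_inv, mul_sub, mul_one, mul_inv_cancel₀ (pow_ne_zero i hx)]

theorem inv_prod_Icc_eq_cycleIndexTerm {n : ℕ} (P : n.Partition) (x : K) :
    (∏ i ∈ Icc 1 n, ((i : K) ^ P.parts.count i * (P.parts.count i).factorial *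
      (x ^ i - 1) ^ P.parts.count i))⁻¹ =
      cycleIndexTerm (fun i => (x ^ i - 1)⁻¹) P.parts := by
  rw [cycleIndexTerm_eq_prod_of_subset _ P.toFinset_parts_subset_Icc_s13, ← prod_inv_distrib]
  refine prod_congr rfl fun i _ => ?_
  simp only [inv_pow, div_eq_mul_inv, mul_inv]
  ring

/-- The expected number of parts of size 2 (irreducible dimension-two subtori) of a
uniformly random `F`-stable maximal torus of `GL_n(F̄_q)`:
`∑_{λ ⊢ n} m₂(λ) |GL_n(q)| / w_q(λ) = q^(n²-n) q²(1-1/q^(n-1))(1-1/q^n)/(2(q²-1))`. -/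
theorem sum_tori_m2 (q : ℕ) (hq : 2 ≤ q) (n : ℕ) (hn : 2 ≤ n) :
    ∑ P : Nat.Partition n,
        (P.parts.count 2 : ℚ) *
          ((∏ i ∈ range n, ((q : ℚ) ^ n - (q : ℚ) ^ i)) /
            (∏ i ∈ Icc 1 n,
              ((i : ℚ) ^ (P.parts.count i) * (Nat.factorial (P.parts.count i) : ℚ) *
                ((q : ℚ) ^ i - 1) ^ (P.parts.count i))))
      = (q : ℚ) ^ (n ^ 2 - n) *
          ((q : ℚ) ^ 2 * (1 - 1 / (q : ℚ) ^ (n - 1)) * (1 - 1 / (q : ℚ) ^ n)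
            / (2 * ((q : ℚ) ^ 2 - 1))) := by
  have hx : (1 : ℚ) < q := by exact_mod_cast hq
  have hx0 : (q : ℚ) ≠ 0 := by positivity
  have hy : ¬IsOfFinOrder (q : ℚ)⁻¹ := fun h => by
    obtain ⟨j, hj, h⟩ := isOfFinOrder_iff_pow_eq_one.mp h
    exact hx.ne' (inv_eq_one.mp ((pow_eq_one_iff_of_nonneg (by positivity) hj.ne').mp h))
  obtain ⟨k, rfl⟩ : ∃ k, n = k + 2 := ⟨n - 2, by lia⟩
  calc _ = (∏ i ∈ range (k + 2), ((q : ℚ) ^ (k + 2) - (q : ℚ) ^ i)) *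
        ∑ P : (k + 2).Partition,
          (P.parts.count 2 : ℚ) * cycleIndexTerm (fun i => ((q : ℚ) ^ i - 1)⁻¹) P.parts := by
        rw [mul_sum]
        refine sum_congr rfl fun P _ => ?_
        rw [div_eq_mul_inv, inv_prod_Icc_eq_cycleIndexTerm]
        ring
    _ = (q : ℚ) ^ ((k + 2) ^ 2) * qPochhammer (q : ℚ)⁻¹ (k + 2) *
        (((q : ℚ) ^ 2 - 1)⁻¹ / 2 * ((q : ℚ)⁻¹ ^ k / qPochhammer (q : ℚ)⁻¹ k)) := by
        rw [sum_count_mul_cycleIndexTerm _ one_le_two (by lia),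
          cycleIndex_inv_pow_sub_one hx0 hy, prod_range_pow_sub_pow hx0]
        norm_num
    _ = _ := by
        have hk : (k + 2) ^ 2 = ((k + 2) ^ 2 - (k + 2)) + 2 + k := by ring_nf; lia
        have hQ := qPochhammer_ne_zero hy k
        have : (q : ℚ) ^ 2 - 1 ≠ 0 := sub_ne_zero.mpr (one_lt_pow₀ hx two_ne_zero).ne'
        rw [qPochhammer_succ, qPochhammer_succ, show k + 2 - 1 = k + 1 by lia]
        nth_rw 1 [hk]
        simp only [pow_add, inv_pow]
        generalize qPochhammer (q : ℚ)⁻¹ k = Q at hQ ⊢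
        field_simp
end
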